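/- Let c₁ > 0, b̄ ≥ 0, let m : [0,∞) → ℝ³ be continuous, let s : [0,∞) → ℝ satisfy |s(t)| ≤ 1 for all t ≥ 0, and let β : [0,∞) → ℝ³ satisfy ‖β(t)‖ ≤ b̄ for all t ≥ 0. If v : [0,∞) → ℝ³ is differentiable and satisfies (d/dt) v(t) = v(t) × m(t) − c₁ v(t) − (1/2) s(t) β(t) for all t ≥ 0, then ‖v(t)‖ ≤ ‖v(0)‖ e^{−c₁ t} + (b̄/(2c₁)) (1 − e^{−c₁ t}) for all t ≥ 0. In particular, if the gyroscope-bias error is bounded by b̄, the vector part of the error quaternion converges globally exponentially, with rate c₁, to the ball of radius b̄/(2c₁) around zero. -/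

import Mathlib

open Filter Real Topology

noncomputable section

/-- ℝ³ with the Euclidean norm. -/
abbrev E3 := EuclideanSpace ℝ (Fin 3)

/-- Cross product on ℝ³. -/
def cross (u v : E3) : E3 :=
  WithLp.toLp 2 ![u 1 * v 2 - u 2 * v 1, u 2 * v 0 - u 0 * v 2, u 0 * v 1 - u 1 * v 0]

/-- The quaternion with real (scalar) part `a` and vector (imaginary) part `v`. -/
def quat (a : ℝ) (v : E3) : Quaternion ℝ := ⟨a, v 0, v 1, v 2⟩

/-- The vector (imaginary) part of a quaternion, as an element of ℝ³. -/
def qvec (q : Quaternion ℝ) : E3 := WithLp.toLp 2 ![q.imI, q.imJ, q.imK]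

open Set
open scoped RealInnerProductSpace

/-! The cross-product term is orthogonal to `v`, so the right derivative of `‖v‖` is at most
`-c₁ ‖v‖ + b̄/2`; at a zero of `v` it equals `‖v̇‖ = ‖s β‖/2`, and elsewhere it is `⟪v, v̇⟫/‖v‖`.
Grönwall's inequality with the negative rate `-c₁` then gives the bound. -/

section NormDeriv

variable {F : Type*} [NormedAddCommGroup F] [InnerProductSpace ℝ F] {f : ℝ → F} {f' : F} {x : ℝ}

theorem HasDerivAt.norm_of_ne_zero (hf : HasDerivAt f f' x) (h0 : f x ≠ 0) :
    HasDerivAt (fun t => ‖f t‖) (⟪f x, f'⟫ / ‖f x‖) x := by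
  have hsqrt := hf.norm_sq.sqrt (by positivity)
  simp only [Real.sqrt_sq (norm_nonneg _)] at hsqrt
  convert hsqrt using 1
  field_simp

theorem HasDerivAt.hasDerivWithinAt_norm_Ici_of_eq_zero (hf : HasDerivAt f f' x) (h0 : f x = 0) :
    HasDerivWithinAt (fun t => ‖f t‖) ‖f'‖ (Ici x) x := by
  rw [← hasDerivWithinAt_Ioi_iff_Ici, hasDerivWithinAt_iff_tendsto_slope' self_notMem_Ioi]
  have hslope : ∀ z ∈ Ioi x, slope (fun t => ‖f t‖) x z = ‖slope f x z‖ := by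
    intro z hz
    rw [slope_def_module, slope_def_module, norm_smul, h0, norm_zero, sub_zero, sub_zero,
      Real.norm_eq_abs, abs_of_pos (inv_pos.2 (sub_pos.2 hz)), smul_eq_mul]
  refine Tendsto.congr' (eventuallyEq_nhdsWithin_of_eqOn fun z hz => (hslope z hz).symm) ?_
  exact ((hasDerivAt_iff_tendsto_slope.1 hf).mono_left
    (nhdsWithin_mono x fun z hz => ne_of_gt hz)).norm

open Classical in
/-- The right derivative of `‖f‖` at a point where `f = u` and `f' = w`. -/
def normRightDeriv (u w : F) : ℝ :=
  if u = 0 then ‖w‖ else ⟪u, w⟫ / ‖u‖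

theorem HasDerivAt.hasDerivWithinAt_norm_Ici (hf : HasDerivAt f f' x) :
    HasDerivWithinAt (fun t => ‖f t‖) (normRightDeriv (f x) f') (Ici x) x := by
  by_cases h0 : f x = 0
  · simpa only [normRightDeriv, if_pos h0] using hf.hasDerivWithinAt_norm_Ici_of_eq_zero h0
  · simpa only [normRightDeriv, if_neg h0] using (hf.norm_of_ne_zero h0).hasDerivWithinAt

end NormDeriv

lemma inner_cross_self (u w : E3) : ⟪u, cross u w⟫ = 0 := by
  simp only [cross, PiLp.inner_apply, Fin.sum_univ_three, RCLike.inner_apply, conj_trivial,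
    Matrix.cons_val_zero, Matrix.cons_val_one, Matrix.cons_val_two, Matrix.head_cons,
    Matrix.tail_cons]
  ring

lemma cross_zero_left (w : E3) : cross 0 w = 0 := by
  ext i
  fin_cases i <;> simp [cross]

theorem normRightDeriv_cross_sub_smul_add_le (u w g : E3) (c : ℝ) :
    normRightDeriv u (cross u w - c • u + g) ≤ -c * ‖u‖ + ‖g‖ := by
  unfold normRightDeriv
  split_ifs with hu
  · simp [hu, cross_zero_left]
  · have hpos : 0 < ‖u‖ := norm_pos_iff.2 hu
    rw [div_le_iff₀ hpos, inner_add_right, inner_sub_right, inner_cross_self,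
      real_inner_smul_right, real_inner_self_eq_norm_sq]
    nlinarith [real_inner_le_norm u g]

theorem gronwallBound_neg (δ ε : ℝ) {c : ℝ} (hc : c ≠ 0) (t : ℝ) :
    gronwallBound δ (-c) ε t = δ * exp (-c * t) + ε / c * (1 - exp (-c * t)) := by
  rw [gronwallBound_of_K_ne_0 (neg_ne_zero.2 hc)]
  field_simp
  ring

theorem norm_le_gronwallBound_of_hasDerivAt_cross {c ε : ℝ} {m g v : ℝ → E3}
    (hg : ∀ t, 0 ≤ t → ‖g t‖ ≤ ε)
    (hv : ∀ t, 0 ≤ t → HasDerivAt v (cross (v t) (m t) - c • v t + g t) t) {t : ℝ} (ht : 0 ≤ t) :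
    ‖v t‖ ≤ gronwallBound ‖v 0‖ (-c) ε t := by
  simpa only [sub_zero] using le_gronwallBound_of_liminf_deriv_right_le (f := fun τ => ‖v τ‖)
    (f' := fun τ => normRightDeriv (v τ) (cross (v τ) (m τ) - c • v τ + g τ)) (a := 0) (b := t)
    (fun τ hτ => (hv τ hτ.1).continuousAt.norm.continuousWithinAt)
    (fun τ hτ _ hr => (hv τ hτ.1).hasDerivWithinAt_norm_Ici.liminf_right_slope_le hr) le_rfl
    (fun τ hτ => (normRightDeriv_cross_sub_smul_add_le _ _ _ _).trans
      (by linarith [hg τ hτ.1]))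
    t ⟨ht, le_rfl⟩

theorem stmt_2 (c₁ bbar : ℝ) (hc₁ : 0 < c₁)
    (m : ℝ → E3)
    (s : ℝ → ℝ) (hs : ∀ t, 0 ≤ t → |s t| ≤ 1)
    (β : ℝ → E3) (hβ : ∀ t, 0 ≤ t → ‖β t‖ ≤ bbar)
    (v : ℝ → E3)
    (hv : ∀ t, 0 ≤ t →
      HasDerivAt v (cross (v t) (m t) - c₁ • v t - (s t / 2) • β t) t) :
    ∀ t, 0 ≤ t →
      ‖v t‖ ≤ ‖v 0‖ * Real.exp (-c₁ * t) + bbar / (2 * c₁) * (1 - Real.exp (-c₁ * t)) := by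
  intro t ht
  have hg : ∀ τ, 0 ≤ τ → ‖-((s τ / 2) • β τ)‖ ≤ bbar / 2 := by
    intro τ hτ
    rw [norm_neg, norm_smul, Real.norm_eq_abs, abs_div, abs_two]
    nlinarith [hs τ hτ, hβ τ hτ, abs_nonneg (s τ), norm_nonneg (β τ)]
  have hbound := norm_le_gronwallBound_of_hasDerivAt_cross hg
    (fun τ hτ => by simpa only [sub_eq_add_neg] using hv τ hτ) ht
  rwa [gronwallBound_neg _ _ hc₁.ne', div_div] at hbound
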